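/- For every k ≥ 2, any strong resolving set of the generalized Petersen graph GP(4k+2, 2) has cardinality at least 4k+2. -/

import Mathlib

/-- A vertex `w` strongly resolves vertices `u` and `v` in graph `G`:
`u` lies on a shortest `v`–`w` path or `v` lies on a shortest `u`–`w` path,
equivalently via distances. -/
def StronglyResolves {V : Type*} (G : SimpleGraph V) (w u v : V) : Prop :=
  G.dist w u = G.dist w v + G.dist v u ∨ G.dist w v = G.dist w u + G.dist u v

/-- `S` is a strong resolving set of `G`. -/
def IsStrongResolvingSet {V : Type*} (G : SimpleGraph V) (S : Set V) : Prop :=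
  ∀ u v : V, u ≠ v → ∃ w ∈ S, StronglyResolves G w u v

/-- The strong metric dimension: minimum cardinality of a strong resolving set. -/
noncomputable def sdim {V : Type*} (G : SimpleGraph V) : ℕ :=
  sInf {m : ℕ | ∃ S : Set V, IsStrongResolvingSet G S ∧ S.ncard = m}

/-- Mutually maximally distant vertices. -/
def MutuallyMaximallyDistant {V : Type*} (G : SimpleGraph V) (u v : V) : Prop :=
  u ≠ v ∧ (∀ w : V, G.Adj u w → G.dist w v ≤ G.dist u v) ∧
    (∀ w : V, G.Adj v w → G.dist u w ≤ G.dist u v)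

/-- The generalized Petersen graph `GP n k`, with outer vertices `Sum.inl i` (the `uᵢ`)
and inner vertices `Sum.inr i` (the `vᵢ`), indices in `ZMod n`. -/
def GP (n k : ℕ) : SimpleGraph (ZMod n ⊕ ZMod n) where
  Adj x y := match x, y with
    | Sum.inl i, Sum.inl j => i ≠ j ∧ (j = i + 1 ∨ i = j + 1)
    | Sum.inl i, Sum.inr j => i = j
    | Sum.inr i, Sum.inl j => i = j
    | Sum.inr i, Sum.inr j => i ≠ j ∧ (j = i + (k : ZMod n) ∨ i = j + (k : ZMod n))
  symm := ⟨by rintro (i|i) (j|j) h <;> simp_all <;> tauto⟩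
  loopless := ⟨by rintro (i|i) h <;> simp_all⟩

/-!
Every vertex `x` and its antipode `x + (2k+1)` on the same cycle are mutually maximally distant.
Their distance is at least `k + 2`: a walk between them shifts the index by an odd multiple of
`2k + 1`, outer edges shift it by `±1`, inner edges by `±2` and spokes not at all, so the walk
uses at least one spoke and one outer edge, or stays on the outer cycle. On the other hand every
neighbour of either vertex is within `k + 2` of the other one. A strong resolving set must contain a
vertex of each mutually maximally distant pair, and the `4k + 2` antipodal pairs partition the
`8k + 4` vertices.
-/

open SimpleGraph

theorem SimpleGraph.Adj.dist_right_le {V : Type*} {G : SimpleGraph V} {v w : V}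
    (h : G.Adj v w) (u : V) : G.dist u w ≤ G.dist u v + 1 := by
  simpa [dist_eq_one_iff_adj.mpr h] using h.reachable.dist_triangle_right u

theorem SimpleGraph.Adj.dist_left_le {V : Type*} {G : SimpleGraph V} {u v : V}
    (h : G.Adj u v) (w : V) : G.dist u w ≤ G.dist v w + 1 := by
  rw [dist_comm, dist_comm (u := v)]
  exact h.symm.dist_right_le w

theorem MutuallyMaximallyDistant.symm {V : Type*} {G : SimpleGraph V} {u v : V}
    (h : MutuallyMaximallyDistant G u v) : MutuallyMaximallyDistant G v u := by
  obtain ⟨hne, hu, hv⟩ := h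
  refine ⟨hne.symm, fun w hw => ?_, fun w hw => ?_⟩
  · rw [dist_comm (u := w), dist_comm (u := v)]
    exact hv w hw
  · rw [dist_comm (u := v), dist_comm (u := v)]
    exact hu w hw

theorem SimpleGraph.Connected.eq_of_dist_eq_add_of_forall_adj {V : Type*} {G : SimpleGraph V}
    (hG : G.Connected) {u v w : V} (h : G.dist w u = G.dist w v + G.dist v u)
    (hmax : ∀ x, G.Adj v x → G.dist u x ≤ G.dist u v) : w = v := by
  by_contra hwv
  obtain ⟨p, hp⟩ := hG.exists_walk_length_eq_dist v w
  cases p with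
  | nil => exact hwv rfl
  | @cons _ x _ hvx q =>
    have hwx : G.dist w x ≤ q.length := dist_comm (G := G) ▸ dist_le q
    have hwv : G.dist w v = q.length + 1 := by rw [dist_comm, ← hp, Walk.length_cons]
    have htri : G.dist w u ≤ G.dist w x + G.dist x u := hG.dist_triangle
    have hxu : G.dist x u = G.dist u x := dist_comm
    have hvu : G.dist v u = G.dist u v := dist_comm
    have := hmax x hvx
    omega

theorem MutuallyMaximallyDistant.mem_or_mem {V : Type*} {G : SimpleGraph V} (hG : G.Connected)
    {S : Set V} (hS : IsStrongResolvingSet G S) {u v : V} (h : MutuallyMaximallyDistant G u v) :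
    u ∈ S ∨ v ∈ S := by
  obtain ⟨w, hwS, hres | hres⟩ := hS u v h.1
  · exact .inr (hG.eq_of_dist_eq_add_of_forall_adj hres h.2.2 ▸ hwS)
  · exact .inl (hG.eq_of_dist_eq_add_of_forall_adj hres h.symm.2.2 ▸ hwS)

theorem Nat.card_le_two_mul_ncard_of_involutive {V : Type*} [Finite V] {σ : V → V}
    (hσ : σ.Involutive) {S : Set V} (hS : ∀ x, x ∈ S ∨ σ x ∈ S) :
    Nat.card V ≤ 2 * S.ncard := by
  have hcover : Set.univ ⊆ S ∪ σ '' S := by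
    intro x _
    rw [hσ.image_eq_preimage_symm]
    exact hS x
  calc Nat.card V = (Set.univ : Set V).ncard := (Set.ncard_univ V).symm
    _ ≤ (S ∪ σ '' S).ncard := Set.ncard_le_ncard hcover
    _ ≤ S.ncard + (σ '' S).ncard := Set.ncard_union_le _ _
    _ ≤ 2 * S.ncard := by have := Set.ncard_image_le (f := σ) (s := S); omega

namespace GP

variable {n m : ℕ}

theorem adj_inl_add_one (hn : 1 < n) (i : ZMod n) : (GP n m).Adj (.inl i) (.inl (i + 1)) := by
  have : Fact (1 < n) := ⟨hn⟩
  exact ⟨by simp, .inl rfl⟩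

theorem adj_inl_inr (i : ZMod n) : (GP n m).Adj (.inl i) (.inr i) := rfl

theorem adj_inr_add_two (hn : 2 < n) (i : ZMod n) : (GP n 2).Adj (.inr i) (.inr (i + 2)) := by
  have h2 : ((2 : ℕ) : ZMod n) ≠ 0 := by
    rw [Ne, ZMod.natCast_eq_zero_iff]
    exact fun h => by have := Nat.le_of_dvd two_pos h; omega
  refine ⟨fun h => h2 ?_, .inl (by simp)⟩
  simpa using h

theorem eq_or_eq_or_eq_of_adj_inl {a : ZMod n} {w : ZMod n ⊕ ZMod n}
    (h : (GP n m).Adj (.inl a) w) :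
    w = .inl (a + 1) ∨ w = .inl (a - 1) ∨ w = .inr a := by
  rcases w with j | j
  · obtain ⟨-, rfl | rfl⟩ : a ≠ j ∧ (j = a + 1 ∨ a = j + 1) := h
    · exact .inl rfl
    · exact .inr (.inl (by simp))
  · exact .inr (.inr (congrArg Sum.inr (h : a = j)).symm)

theorem eq_or_eq_or_eq_of_adj_inr {a : ZMod n} {w : ZMod n ⊕ ZMod n}
    (h : (GP n m).Adj (.inr a) w) :
    w = .inr (a + m) ∨ w = .inr (a - m) ∨ w = .inl a := by
  rcases w with j | j
  · exact .inr (.inr (congrArg Sum.inl (h : a = j)).symm)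
  · obtain ⟨-, rfl | rfl⟩ : a ≠ j ∧ (j = a + m ∨ a = j + m) := h
    · exact .inl rfl
    · exact .inr (.inl (by simp))

theorem connected (hn : 1 < n) : (GP n m).Connected := by
  have : NeZero n := ⟨by omega⟩
  have houter : ∀ j : ℕ, (GP n m).Reachable (.inl 0) (.inl (j : ZMod n)) := by
    intro j
    induction j with
    | zero => simp
    | succ j ih => simpa using ih.trans (adj_inl_add_one hn _).reachable
  refine (connected_iff_exists_forall_reachable _).mpr ⟨.inl 0, ?_⟩
  rintro (i | i) <;> rw [← ZMod.natCast_zmod_val i]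
  · exact houter _
  · exact (houter _).trans (adj_inl_inr _).reachable

section Walks

variable {b b' : ZMod n}

theorem dist_inr_inr_le_of_even (hn : 2 < n) (j : ℕ) (h : b' = b + 2 * j) :
    (GP n 2).dist (.inr b) (.inr b') ≤ j := by
  subst h
  induction j with
  | zero => simp
  | succ j ih =>
    have := (adj_inr_add_two hn (b + 2 * j)).dist_right_le (.inr b)
    rw [show b + 2 * j + 2 = b + 2 * ((j + 1 : ℕ) : ZMod n) by push_cast; ring] at this
    omega

theorem dist_inl_inl_le_of_even (hn : 2 < n) (j : ℕ) (h : b' = b + 2 * j) :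
    (GP n 2).dist (.inl b) (.inl b') ≤ j + 2 := by
  have h₁ := (adj_inl_inr (m := 2) b).dist_left_le (.inl b')
  have h₂ := (adj_inl_inr (m := 2) b').symm.dist_right_le (.inr b)
  have := dist_inr_inr_le_of_even hn j h
  omega

theorem dist_inr_inl_le_of_odd (hn : 2 < n) (j : ℕ) (h : b' = b + 2 * j + 1) :
    (GP n 2).dist (.inr b) (.inl b') ≤ j + 2 := by
  have h₁ := (adj_inl_inr (m := 2) (b + 2 * (j : ZMod n))).symm.dist_right_le (.inr b)
  have h₂ := (adj_inl_add_one (m := 2) (by omega) (b + 2 * (j : ZMod n))).dist_right_le (.inr b)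
  have := dist_inr_inr_le_of_even hn (b := b) j rfl
  rw [← h] at h₂
  omega

theorem dist_inl_inr_le_of_odd (hn : 2 < n) (j : ℕ) (h : b' = b + 2 * j + 1) :
    (GP n 2).dist (.inl b) (.inr b') ≤ j + 2 := by
  have h₁ := (adj_inl_add_one (m := 2) (by omega) b).dist_left_le (.inr b')
  have h₂ := (adj_inl_inr (m := 2) (b + 1)).dist_left_le (.inr b')
  have := dist_inr_inr_le_of_even hn (b := b + 1) j (h.trans (by ring))
  omega

theorem dist_inr_inr_le_of_odd (hn : 2 < n) (j : ℕ) (h : b' = b + 2 * j + 1) :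
    (GP n 2).dist (.inr b) (.inr b') ≤ j + 3 := by
  have h₁ := (adj_inl_inr (m := 2) b').dist_right_le (.inr b)
  have := dist_inr_inl_le_of_odd hn j h
  omega

end Walks

def index : ZMod n ⊕ ZMod n → ZMod n := Sum.elim id id

@[simp] theorem index_inl (i : ZMod n) : index (.inl i) = i := rfl

@[simp] theorem index_inr (i : ZMod n) : index (.inr i) = i := rfl

/-- `o`, `s`, `t` count the outer edges, spokes and inner edges of `p`, and `D` is the change of
index along `p`, lifted to `ℤ`. -/
theorem exists_displacement_of_walk {x y : ZMod n ⊕ ZMod n} (p : (GP n 2).Walk x y) :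
    ∃ (o s t : ℕ) (D : ℤ), p.length = o + s + t ∧ (D : ZMod n) = index y - index x ∧
      D.natAbs ≤ o + 2 * t ∧ D % 2 = o % 2 ∧
      (s = 0 → (x.isLeft → t = 0) ∧ (x.isRight → o = 0)) := by
  induction p with
  | nil => exact ⟨0, 0, 0, 0, by simp⟩
  | @cons x z y h q ih =>
    obtain ⟨o, s, t, D, hlen, hD, habs, hpar, hside⟩ := ih
    rw [Walk.length_cons, hlen]
    rcases x with a | a
    · rcases eq_or_eq_or_eq_of_adj_inl h with rfl | rfl | rfl
      · refine ⟨o + 1, s, t, D + 1, by omega, ?_, by omega, by omega, by simpa using hside⟩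
        push_cast [hD]; simp only [index_inl]; ring
      · refine ⟨o + 1, s, t, D - 1, by omega, ?_, by omega, by omega, by simpa using hside⟩
        push_cast [hD]; simp only [index_inl]; ring
      · exact ⟨o, s + 1, t, D, by omega, by simpa using hD, habs, hpar, by simp⟩
    · rcases eq_or_eq_or_eq_of_adj_inr h with rfl | rfl | rfl
      · refine ⟨o, s, t + 1, D + 2, by omega, ?_, by omega, by omega, by simpa using hside⟩
        push_cast [hD]; simp only [index_inr]; ring
      · refine ⟨o, s, t + 1, D - 2, by omega, ?_, by omega, by omega, by simpa using hside⟩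
        push_cast [hD]; simp only [index_inr]; ring
      · exact ⟨o, s + 1, t, D, by omega, by simpa using hD, habs, hpar, by simp⟩

variable {k : ℕ}

theorem le_dist_of_index_sub_eq (hk : 1 ≤ k) {x y : ZMod (4 * k + 2) ⊕ ZMod (4 * k + 2)}
    (hxy : index y - index x = 2 * k + 1) : k + 2 ≤ (GP (4 * k + 2) 2).dist x y := by
  obtain ⟨p, hp⟩ := (connected (by omega)).exists_walk_length_eq_dist x y
  obtain ⟨o, s, t, D, hlen, hD, habs, hpar, hside⟩ := exists_displacement_of_walk p
  obtain ⟨c, hc⟩ : ((4 * k + 2 : ℕ) : ℤ) ∣ D - (2 * k + 1) := by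
    rw [← ZMod.intCast_zmod_eq_zero_iff_dvd]
    push_cast [hD, hxy]
    ring
  have hD : D = (2 * k + 1) * (2 * c + 1) := by push_cast at hc; linear_combination hc
  have habsD : 2 * k + 1 ≤ D.natAbs := by
    rw [hD, Int.natAbs_mul]
    have h2k : (2 * (k : ℤ) + 1).natAbs = 2 * k + 1 := by omega
    rw [h2k]
    exact Nat.le_mul_of_pos_right _ (by omega)
  have hodd : D % 2 = 1 := Int.odd_iff.mp ⟨(2 * k + 1) * c + k, by rw [hD]; ring⟩
  rw [← hp, hlen]
  rcases Nat.eq_zero_or_pos s with rfl | hs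
  · rcases x with a | a <;>
      simp only [Sum.isLeft_inl, Sum.isLeft_inr, Sum.isRight_inl, Sum.isRight_inr,
        Bool.false_eq_true, IsEmpty.forall_iff, forall_const, true_and, and_true] at hside <;>
      omega
  · omega

def rotate (t : ZMod n) : ZMod n ⊕ ZMod n → ZMod n ⊕ ZMod n := Sum.map (· + t) (· + t)

@[simp] theorem rotate_inl (t i : ZMod n) : rotate t (.inl i) = .inl (i + t) := rfl

@[simp] theorem rotate_inr (t i : ZMod n) : rotate t (.inr i) = .inr (i + t) := rfl

@[simp] theorem index_rotate (t : ZMod n) (x : ZMod n ⊕ ZMod n) :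
    index (rotate t x) = index x + t := by
  cases x <;> rfl

theorem involutive_rotate_antipode (k : ℕ) :
    Function.Involutive (rotate (2 * k + 1 : ZMod (4 * k + 2))) := by
  have h0 : (4 * k + 2 : ZMod (4 * k + 2)) = 0 := by exact_mod_cast ZMod.natCast_self (4 * k + 2)
  rintro (a | a) <;> simp only [rotate_inl, rotate_inr, Sum.inl.injEq, Sum.inr.injEq] <;>
    linear_combination h0

theorem dist_rotate_antipode_le_of_adj (hk : 1 ≤ k) {x w : ZMod (4 * k + 2) ⊕ ZMod (4 * k + 2)}
    (h : (GP (4 * k + 2) 2).Adj x w) :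
    (GP (4 * k + 2) 2).dist w (rotate (2 * k + 1) x) ≤ k + 2 := by
  have hn : 2 < 4 * k + 2 := by omega
  have h0 : (4 * k + 2 : ZMod (4 * k + 2)) = 0 := by exact_mod_cast ZMod.natCast_self (4 * k + 2)
  rcases x with a | a
  · rcases eq_or_eq_or_eq_of_adj_inl h with rfl | rfl | rfl <;> simp only [rotate_inl]
    · exact dist_inl_inl_le_of_even hn k (by ring)
    · rw [dist_comm]
      exact dist_inl_inl_le_of_even hn k (by linear_combination -h0)
    · exact dist_inr_inl_le_of_odd hn k (by ring)
  · have hk' : ((k - 1 : ℕ) : ZMod (4 * k + 2)) = k - 1 := by push_cast [Nat.cast_sub hk]; ring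
    rcases eq_or_eq_or_eq_of_adj_inr h with rfl | rfl | rfl <;> simp only [rotate_inr]
    · refine (dist_inr_inr_le_of_odd hn (k - 1) ?_).trans (by omega)
      rw [hk']; push_cast; ring
    · rw [dist_comm]
      refine (dist_inr_inr_le_of_odd hn (k - 1) ?_).trans (by omega)
      rw [hk']; push_cast; linear_combination -h0
    · exact dist_inl_inr_le_of_odd hn k (by ring)

theorem mutuallyMaximallyDistant_rotate_antipode (hk : 1 ≤ k)
    (x : ZMod (4 * k + 2) ⊕ ZMod (4 * k + 2)) :
    MutuallyMaximallyDistant (GP (4 * k + 2) 2) x (rotate (2 * k + 1) x) := by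
  have hlow : k + 2 ≤ (GP (4 * k + 2) 2).dist x (rotate (2 * k + 1) x) :=
    le_dist_of_index_sub_eq hk (by simp)
  refine ⟨fun h => ?_, fun w hw => (dist_rotate_antipode_le_of_adj hk hw).trans hlow,
    fun w hw => ?_⟩
  · rw [← h, dist_self] at hlow
    omega
  · have := dist_rotate_antipode_le_of_adj hk hw
    rw [involutive_rotate_antipode k x, dist_comm] at this
    exact this.trans hlow

end GP

/-- For `k ≥ 2`, any strong resolving set of `GP (4k+2) 2` has at least `4k+2` elements. -/
theorem stmt_5 (k : ℕ) (hk : 2 ≤ k) (S : Set (ZMod (4*k+2) ⊕ ZMod (4*k+2)))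
    (hS : IsStrongResolvingSet (GP (4*k+2) 2) S) : 4*k + 2 ≤ S.ncard := by
  have hcover : ∀ x, x ∈ S ∨ GP.rotate (2 * k + 1 : ZMod (4 * k + 2)) x ∈ S := fun x =>
    (GP.mutuallyMaximallyDistant_rotate_antipode (by omega) x).mem_or_mem
      (GP.connected (by omega)) hS
  have := Nat.card_le_two_mul_ncard_of_involutive (GP.involutive_rotate_antipode k) hcover
  rw [Nat.card_sum, Nat.card_zmod] at this
  omega
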